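/- arXiv:2212.05038 — 3 statements merged into one kernel-verified Lean document; each statement's English description precedes it below -/
import Mathlib

section
/- For the Bethe lattice with coordination number κ and scaled hopping t̃/√κ, the local Green function G_κ(z) = 1/(z - ε - (κ/(2(κ-1)))·(z - ε - √((z-ε)² - 4(κ-1)(t̃/√κ)²))) converges as κ → ∞ to G_∞(z) = (z - ε - √((z-ε)² - 4t̃²))/(2t̃²), i.e., the boundary Green function of a semi-infinite 1d chain with hopping t̃. -/
open Complex Filter

private lemma cpow_half_sq (u : ℂ) : (u ^ ((1:ℂ)/2))^2 = u := by
  rcases eq_or_ne u 0 with h | h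
  · simp [h]
  · rw [sq, ← Complex.cpow_add _ _ h]; norm_num

private lemma neg_real_cpow_half (x : ℝ) (hx : x < 0) :
    ((x:ℂ)) ^ ((1:ℂ)/2) = (Real.sqrt (-x)) * Complex.I := by
  have hx0 : (x:ℂ) ≠ 0 := by exact_mod_cast hx.ne
  have hlog : Complex.log x = (Real.log (-x) : ℝ) + Real.pi * Complex.I := by
    rw [Complex.log, Complex.arg_ofReal_of_neg hx]
    simp [Complex.norm_real, Real.norm_eq_abs, abs_of_neg hx]
  rw [Complex.cpow_def_of_ne_zero hx0, hlog]
  have h1 : ((Real.log (-x) : ℝ) + Real.pi * Complex.I) * (1/2)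
      = ((Real.log (-x) / 2 : ℝ) : ℂ) + ((Real.pi/2 : ℝ):ℝ) * Complex.I := by
    push_cast; ring
  rw [h1, Complex.exp_add, Complex.exp_mul_I, ← Complex.ofReal_exp]
  have h2 : Real.exp (Real.log (-x) / 2) = Real.sqrt (-x) := by
    rw [Real.sqrt_eq_rpow, Real.rpow_def_of_pos (by linarith)]
    ring_nf
  have h3 : Real.cos (Real.pi/2) = 0 := Real.cos_pi_div_two
  have h4 : Real.sin (Real.pi/2) = 1 := Real.sin_pi_div_two
  rw [h2, ← Complex.ofReal_cos, ← Complex.ofReal_sin, h3, h4]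
  simp

/-- convergence of complex sqrt along real sequences with negative limit -/
private lemma tendsto_cpow_half_ofReal {x : ℕ → ℝ} {l : ℝ} (hl : l < 0)
    (hx : Tendsto x atTop (nhds l)) :
    Tendsto (fun n => ((x n : ℂ)) ^ ((1:ℂ)/2)) atTop
      (nhds (((l:ℂ)) ^ ((1:ℂ)/2))) := by
  have hev : ∀ᶠ n in atTop, ((x n : ℂ)) ^ ((1:ℂ)/2)
      = ((Real.sqrt (-(x n)) : ℝ) : ℂ) * Complex.I := by
    filter_upwards [hx.eventually (gt_mem_nhds hl)] with n hn
    exact neg_real_cpow_half _ hn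
  rw [neg_real_cpow_half _ hl]
  refine Tendsto.congr' (EventuallyEq.symm hev) ?_
  exact (((Complex.continuous_ofReal.tendsto _).comp
    ((Real.continuous_sqrt.tendsto _).comp hx.neg)).mul tendsto_const_nhds)

/-- On the Bethe lattice with coordination number κ and scaled hopping t̃/√κ, the local
Green function converges as κ → ∞ to the boundary Green function of a semi-infinite
1d chain with hopping t̃. -/
theorem bethe_lattice_infinite_coordination_limit
    (ε tt : ℝ) (htt : tt ≠ 0) (z : ℂ) (hz : z.im ≠ 0) :
    Filter.Tendsto
      (fun κ : ℕ =>
        1 / (z - (ε : ℂ) -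
          ((κ : ℂ) / (2 * ((κ : ℂ) - 1)))
            * (z - (ε : ℂ) -
                ((z - (ε : ℂ)) ^ 2
                    - 4 * ((κ : ℂ) - 1) * (((tt / Real.sqrt (κ : ℝ)) : ℝ) : ℂ) ^ 2)
                  ^ ((1 : ℂ) / 2))))
      Filter.atTop
      (nhds
        ((z - (ε : ℂ) - ((z - (ε : ℂ)) ^ 2 - 4 * (tt : ℂ) ^ 2) ^ ((1 : ℂ) / 2))
          / (2 * (tt : ℂ) ^ 2))) := by
  set w : ℂ := z - (ε : ℂ) with hwdef
  have hwim : w.im ≠ 0 := by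
    simpa [hwdef, Complex.sub_im] using hz
  set u : ℂ := w ^ 2 - 4 * (tt : ℂ) ^ 2 with hudef
  set s : ℂ := u ^ ((1:ℂ)/2) with hsdef
  -- basic limits
  have h0 : Tendsto (fun κ : ℕ => 1 / (κ : ℂ)) atTop (nhds 0) := by
    have h := (Complex.continuous_ofReal.tendsto (0:ℝ)).comp
      tendsto_one_div_atTop_nhds_zero_nat
    rw [Complex.ofReal_zero] at h
    exact h.congr (fun n => by simp [Function.comp])
  -- the inner expression equals u + 4tt²/κ eventually
  have hev1 : ∀ᶠ κ : ℕ in atTop,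
      (w ^ 2 - 4 * ((κ : ℂ) - 1) * (((tt / Real.sqrt (κ : ℝ)) : ℝ) : ℂ) ^ 2)
        = u + 4 * (tt:ℂ)^2 * (1/(κ:ℂ)) := by
    filter_upwards [eventually_ge_atTop 1] with κ hκ
    have hκ0 : (0:ℝ) < (κ:ℝ) := by exact_mod_cast hκ
    have hs : ((tt / Real.sqrt (κ : ℝ)) : ℝ)^2 = tt^2 / (κ:ℝ) := by
      rw [div_pow, Real.sq_sqrt hκ0.le]
    have hκc : (κ:ℂ) ≠ 0 := by exact_mod_cast hκ0.ne'
    rw [show (((tt / Real.sqrt (κ : ℝ)) : ℝ) : ℂ) ^ 2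
        = ((((tt / Real.sqrt (κ : ℝ)) : ℝ)^2 : ℝ) : ℂ) by push_cast; ring, hs]
    rw [hudef]
    push_cast
    field_simp
    ring
  -- tendsto of u_κ
  have hvu : Tendsto (fun κ : ℕ => u + 4 * (tt:ℂ)^2 * (1/(κ:ℂ))) atTop (nhds u) := by
    have := (tendsto_const_nhds (x := u) (f := atTop)).add
      ((tendsto_const_nhds (x := (4 * (tt:ℂ)^2)) (f := atTop)).mul h0)
    simpa using this
  -- tendsto of sqrt
  have hsB : Tendsto (fun κ : ℕ => (u + 4 * (tt:ℂ)^2 * (1/(κ:ℂ))) ^ ((1:ℂ)/2))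
      atTop (nhds s) := by
    rcases eq_or_ne w.re 0 with hre | hre
    · -- u and all u_κ are negative reals
      have httpos : (0:ℝ) < tt^2 := by positivity
      have hwim2 : (0:ℝ) < w.im^2 := by positivity
      have hw2 : w^2 = ((-(w.im^2) : ℝ) : ℂ) := by
        apply Complex.ext <;> simp [pow_two, Complex.mul_re, Complex.mul_im, hre]
      have hureal : u = (((-(w.im^2) - 4*tt^2) : ℝ) : ℂ) := by
        rw [hudef, hw2]; push_cast; ring
      have hxev : ∀ κ : ℕ, u + 4 * (tt:ℂ)^2 * (1/(κ:ℂ))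
          = (((-(w.im^2) - 4*tt^2 + 4*tt^2*(1/(κ:ℝ))) : ℝ) : ℂ) := by
        intro κ; rw [hureal]; push_cast; ring
      have hl : (-(w.im^2) - 4*tt^2 : ℝ) < 0 := by nlinarith
      have hxt : Tendsto (fun κ : ℕ => (-(w.im^2) - 4*tt^2 + 4*tt^2*(1/(κ:ℝ)) : ℝ))
          atTop (nhds (-(w.im^2) - 4*tt^2)) := by
        have := (tendsto_const_nhds (x := (-(w.im^2) - 4*tt^2 : ℝ)) (f := atTop)).add
          ((tendsto_const_nhds (x := (4*tt^2 : ℝ)) (f := atTop)).mul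
            tendsto_one_div_atTop_nhds_zero_nat)
        simpa using this
      have ht := tendsto_cpow_half_ofReal hl hxt
      have hs_eq : s = ((((-(w.im^2) - 4*tt^2) : ℝ)) : ℂ) ^ ((1:ℂ)/2) := by
        rw [hsdef, hureal]
      rw [hs_eq]
      exact ht.congr (fun κ => congrArg (· ^ ((1:ℂ)/2)) (hxev κ).symm)
    · -- u has nonzero imaginary part
      have huim : u.im ≠ 0 := by
        have : u.im = 2 * w.re * w.im := by
          simp [hudef, pow_two, Complex.sub_im, Complex.mul_im]; ring
        rw [this]
        exact mul_ne_zero (mul_ne_zero two_ne_zero hre) hwim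
      have hc : ContinuousAt (fun x : ℂ => x ^ ((1:ℂ)/2)) u :=
        Complex.continuousAt_cpow_const_of_re_pos (Or.inr huim) (by norm_num)
      exact (hc.tendsto).comp hvu
  -- algebraic facts
  have hs2 : s^2 = u := cpow_half_sq u
  have httc : (tt:ℂ) ≠ 0 := by exact_mod_cast htt
  have hws : w + s ≠ 0 := by
    intro h
    have hsw : s = -w := by linear_combination h
    have : u = w^2 := by rw [← hs2, hsw]; ring
    rw [hudef] at this
    have : (4:ℂ) * (tt:ℂ)^2 = 0 := by linear_combination -this
    simp [httc] at this
  -- the limit of κ/(2(κ-1))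
  have hhalf : Tendsto (fun κ : ℕ => (κ:ℂ) / (2 * ((κ:ℂ) - 1))) atTop (nhds (1/2)) := by
    have h1 : Tendsto (fun κ : ℕ => 2 * ((1:ℂ) - 1/(κ:ℂ))) atTop (nhds 2) := by
      have := ((tendsto_const_nhds (x := (1:ℂ)) (f := atTop)).sub h0).const_mul (2:ℂ)
      simpa using this
    have h2 : Tendsto (fun κ : ℕ => 1 / (2 * ((1:ℂ) - 1/(κ:ℂ)))) atTop (nhds (1/2)) :=
      tendsto_const_nhds.div h1 two_ne_zero
    refine Tendsto.congr' ?_ h2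
    filter_upwards [eventually_ge_atTop 1] with κ hκ
    have hκ0 : (κ:ℂ) ≠ 0 := by
      exact_mod_cast (Nat.one_le_iff_ne_zero.mp hκ)
    rcases eq_or_ne ((κ:ℂ) - 1) 0 with h | h
    · have h4 : (κ:ℂ) = 1 := by linear_combination h
      simp [h4]
    · field_simp
      try ring
  -- the denominator tendsto
  have hD : Tendsto (fun κ : ℕ =>
      w - ((κ:ℂ) / (2 * ((κ:ℂ) - 1))) *
        (w - (u + 4 * (tt:ℂ)^2 * (1/(κ:ℂ))) ^ ((1:ℂ)/2)))
      atTop (nhds (w - (1/2) * (w - s))) :=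
    tendsto_const_nhds.sub (hhalf.mul (tendsto_const_nhds.sub hsB))
  have hDne : w - (1/2) * (w - s) ≠ 0 := by
    intro h
    apply hws
    linear_combination 2 * h
  have hmain : Tendsto (fun κ : ℕ =>
      1 / (w - ((κ:ℂ) / (2 * ((κ:ℂ) - 1))) *
        (w - (u + 4 * (tt:ℂ)^2 * (1/(κ:ℂ))) ^ ((1:ℂ)/2))))
      atTop (nhds (1 / (w - (1/2) * (w - s)))) :=
    tendsto_const_nhds.div hD hDne
  have hlim : 1 / (w - (1/2) * (w - s)) = (w - s) / (2 * (tt:ℂ)^2) := by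
    have key : (w + s) * (w - s) = 4 * (tt:ℂ)^2 := by
      have : w^2 - s^2 = 4 * (tt:ℂ)^2 := by rw [hs2, hudef]; ring
      linear_combination this
    rw [div_eq_div_iff hDne (mul_ne_zero two_ne_zero (pow_ne_zero 2 httc))]
    linear_combination -key/2
  rw [hlim] at hmain
  refine Tendsto.congr' ?_ hmain
  filter_upwards [hev1] with κ hκ
  rw [hκ]
end

section
/- Suppose a spectral measure μ on ℝ is symmetric (μ(-S) = μ(S)) with finite moments μ_{2k} = ∫ω^{2k}dμ, and the associated Jacobi (tridiagonal) parameters are t₁, t₂ (first two off-diagonal entries, all diagonal entries zero). If μ̃ = w·δ₀ + (1-w)·μ with w = 1 - t₂²/t₁² ∈ (0,1), then the Jacobi parameters t̃₁, t̃₂ of μ̃ satisfy t̃₁² = t₂² and t̃₂² = t₁²: adding the zero-energy pole of weight w swaps the first two hopping parameters. -/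
open MeasureTheory

lemma integrable_dirac' {f : ℝ → ℝ} (hf : Measurable f) (a : ℝ) :
    Integrable f (Measure.dirac a) := by
  have : f =ᵐ[Measure.dirac a] fun _ => f a := by
    rw [Filter.EventuallyEq, MeasureTheory.ae_dirac_eq]
    exact Filter.eventually_pure.mpr rfl
  exact (integrable_const (f a)).congr this.symm

/-- Adding a zero-energy pole of weight `w = 1 - t₂²/t₁²` to a symmetric spectral
measure with Jacobi (tridiagonal, zero-diagonal) parameters `t₁, t₂` — i.e. with
moments `μ₂ = t₁²`, `μ₄ = t₁²(t₁² + t₂²)` — swaps the first two hopping parameters: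
the new measure `μ̃ = w·δ₀ + (1-w)·μ` has `t̃₁² = t₂²` and `t̃₂² = t₁²`
(where `t̃₁² = μ̃₂` and `t̃₂² = μ̃₄/μ̃₂ - μ̃₂`). -/
theorem jacobi_parameter_parity_flip
    (μ : Measure ℝ) [IsProbabilityMeasure μ]
    (hsymm : μ.map (fun x => -x) = μ)
    (t1 t2 : ℝ) (ht1 : 0 < t1) (ht2 : 0 < t2)
    (hint2 : Integrable (fun x => x ^ 2) μ)
    (hint4 : Integrable (fun x => x ^ 4) μ)
    (hμ2 : ∫ x, x ^ 2 ∂μ = t1 ^ 2)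
    (hμ4 : ∫ x, x ^ 4 ∂μ = t1 ^ 2 * (t1 ^ 2 + t2 ^ 2))
    (w : ℝ) (hw : w = 1 - t2 ^ 2 / t1 ^ 2) (hw0 : 0 < w) (hw1 : w < 1) :
    let ν : Measure ℝ :=
      ENNReal.ofReal w • Measure.dirac (0 : ℝ) + ENNReal.ofReal (1 - w) • μ
    (∫ x, x ^ 2 ∂ν) = t2 ^ 2 ∧
    (∫ x, x ^ 4 ∂ν) / (∫ x, x ^ 2 ∂ν) - (∫ x, x ^ 2 ∂ν) = t1 ^ 2 := by
  intro ν
  have h1w : (1 : ℝ) - w = t2 ^ 2 / t1 ^ 2 := by rw [hw]; ring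
  have h1w0 : (0 : ℝ) ≤ 1 - w := by linarith
  have key : ∀ (f : ℝ → ℝ), Measurable f → Integrable f μ →
      ∫ x, f x ∂ν = w * f 0 + (1 - w) * ∫ x, f x ∂μ := by
    intro f hf hfi
    have hd : Integrable f (ENNReal.ofReal w • Measure.dirac (0:ℝ)) :=
      (integrable_dirac' hf 0).smul_measure (by simp)
    have hm : Integrable f (ENNReal.ofReal (1 - w) • μ) :=
      hfi.smul_measure (by simp)
    rw [show ν = _ from rfl, integral_add_measure hd hm,
      integral_smul_measure, integral_smul_measure,
      integral_dirac, ENNReal.toReal_ofReal hw0.le, ENNReal.toReal_ofReal h1w0]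
    simp [smul_eq_mul]
  have h2 : ∫ x, x ^ 2 ∂ν = t2 ^ 2 := by
    rw [key (fun x => x ^ 2) (by measurability) hint2, hμ2]
    rw [h1w, div_mul_cancel₀ _ (by positivity : t1 ^ 2 ≠ 0)]
    ring
  have h4 : ∫ x, x ^ 4 ∂ν = t2 ^ 2 / t1 ^ 2 * (t1 ^ 2 * (t1 ^ 2 + t2 ^ 2)) := by
    rw [key (fun x => x ^ 4) (by measurability) hint4, hμ4, h1w]
    ring
  refine ⟨h2, ?_⟩
  rw [h2, h4]
  have ht1' : t1 ^ 2 ≠ 0 := by positivity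
  have ht2' : t2 ^ 2 ≠ 0 := by positivity
  field_simp
  ring
end

section
/- For the SSH boundary Green function G(z) satisfying G(z) = 1/(z - t_A²/(z - t_B²·G(z))) with 0 < t_A < t_B, the residue of G at its pole z = 0 equals w_p = (t_B² - t_A²)/t_B². -/
open Filter Topology

/-- The SSH boundary Green function, satisfying
`G(z) = 1/(z - t_A²/(z - t_B²·G(z)))` near `z = 0` with `0 < t_A < t_B`, has a pole at
`z = 0` whose residue (the limit of `z·G(z)`) equals `w_p = (t_B² - t_A²)/t_B²`. -/
theorem ssh_topological_pole_weight (tA tB : ℝ) (htA : 0 < tA) (htAB : tA < tB)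
    (G : ℂ → ℂ) (L : ℂ)
    (hG : ∀ᶠ z in nhdsWithin (0 : ℂ) {(0 : ℂ)}ᶜ,
      G z = 1 / (z - (tA : ℂ) ^ 2 / (z - (tB : ℂ) ^ 2 * G z)))
    (hL : Filter.Tendsto (fun z => z * G z)
      (nhdsWithin (0 : ℂ) {(0 : ℂ)}ᶜ) (nhds L))
    (hL0 : L ≠ 0) :
    L = (((tB ^ 2 - tA ^ 2) / tB ^ 2 : ℝ) : ℂ) := by
  set l := nhdsWithin (0 : ℂ) {(0 : ℂ)}ᶜ with hl
  have htB : (0:ℝ) < tB := htA.trans htAB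
  have hzne : ∀ᶠ z in l, z ≠ 0 := by
    have := self_mem_nhdsWithin (a := (0:ℂ)) (s := {(0:ℂ)}ᶜ)
    filter_upwards [this] with z hz
    simpa using hz
  have hz0 : Filter.Tendsto (fun z : ℂ => z) l (nhds 0) :=
    tendsto_id.mono_left nhdsWithin_le_nhds
  have hnorm : ∀ᶠ z in l, ‖z‖ < tB := by
    have hn : Filter.Tendsto (fun z : ℂ => ‖z‖) l (nhds 0) := by
      simpa using hz0.norm
    exact hn.eventually_lt_const htB
  have hfne : ∀ᶠ z in l, z * G z ≠ 0 := hL.eventually_ne hL0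
  have key : ∀ᶠ z in l,
      (z * G z) * (z^2 - (tB:ℂ)^2 * (z * G z) - (tA:ℂ)^2)
        = z^2 - (tB:ℂ)^2 * (z * G z) := by
    filter_upwards [hG, hzne, hnorm, hfne] with z hGz hz hn hf
    have h1 : z - (tB:ℂ)^2 * G z ≠ 0 := by
      intro h1'
      rw [h1', div_zero, sub_zero] at hGz
      have hzz : z^2 = (tB:ℂ)^2 := by
        have hG0 : G z = z⁻¹ := by simpa [one_div] using hGz
        rw [hG0] at h1'
        field_simp at h1'
        linear_combination h1'
      have := congrArg norm hzz
      simp [norm_pow, Complex.norm_real] at this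
      have habs : |tB| = tB := abs_of_pos htB
      nlinarith [norm_nonneg z, habs]
    have h2 : z - (tA:ℂ)^2 / (z - (tB:ℂ)^2 * G z) ≠ 0 := by
      intro h2'
      rw [h2'] at hGz
      simp at hGz
      exact hf (by rw [hGz]; ring)
    rw [eq_div_iff h2] at hGz
    have e : (tA:ℂ)^2 / (z - (tB:ℂ)^2 * G z) * (z - (tB:ℂ)^2 * G z) = (tA:ℂ)^2 :=
      div_mul_cancel₀ _ h1
    linear_combination (z : ℂ) * ((z - (tB:ℂ)^2 * G z) * hGz + G z * e)
  -- limits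
  have hsq : Filter.Tendsto (fun z : ℂ => z^2) l (nhds 0) := by
    simpa using hz0.pow 2
  have hnum : Filter.Tendsto (fun z : ℂ => z^2 - (tB:ℂ)^2 * (z * G z)) l
      (nhds (-( (tB:ℂ)^2 * L))) := by
    have := hsq.sub (hL.const_mul ((tB:ℂ)^2))
    simpa using this
  have hlhs : Filter.Tendsto
      (fun z : ℂ => (z * G z) * (z^2 - (tB:ℂ)^2 * (z * G z) - (tA:ℂ)^2)) l
      (nhds (L * (-((tB:ℂ)^2 * L) - (tA:ℂ)^2))) := by
    exact hL.mul (hnum.sub tendsto_const_nhds)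
  have hrhs : Filter.Tendsto
      (fun z : ℂ => (z * G z) * (z^2 - (tB:ℂ)^2 * (z * G z) - (tA:ℂ)^2)) l
      (nhds (-((tB:ℂ)^2 * L))) := hnum.congr' (by filter_upwards [key] with z h; exact h.symm)
  haveI : l.NeBot := by rw [hl]; infer_instance
  have heq : L * (-((tB:ℂ)^2 * L) - (tA:ℂ)^2) = -((tB:ℂ)^2 * L) :=
    tendsto_nhds_unique hlhs hrhs
  -- algebra
  have htBc : ((tB:ℂ))^2 ≠ 0 := pow_ne_zero _ (Complex.ofReal_ne_zero.2 htB.ne')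
  have : (tB:ℂ)^2 * L = (tB:ℂ)^2 - (tA:ℂ)^2 := by
    have h' : L * ((tB:ℂ)^2 * L + (tA:ℂ)^2 - (tB:ℂ)^2) = 0 := by
      linear_combination -heq
    rcases mul_eq_zero.1 h' with h | h
    · exact absurd h hL0
    · linear_combination h
  push_cast
  rw [eq_div_iff htBc]
  linear_combination this
end
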